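/- arXiv:2305.19984 — 2 statements merged into one kernel-verified Lean document; each statement's English description precedes it below -/
import Mathlib

section
/- Let X be a smooth projective surface, f : X → C a surjective morphism to a smooth curve with connected fibers, H an ample divisor, F the class of a fiber, and H_t = H + tF for t > 0 rational. If D is a divisor class with (D,F) ≠ 0 and (D, H_t) = 0 for some t > 0, then D² ≤ −(H² + 2t(H,F))/(H,F)². -/
/-- Yoshioka's wall estimate: let `X` be a smooth projective
surface fibered over a smooth curve `C` with connected fibers, `H` ample, `F`
the fiber class (so `F² = 0` and `(H,F) > 0`), and `H_t = H + tF` for `t > 0`.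
`N` models the rational Néron–Severi group with its symmetric intersection
pairing `B`; the Hodge index theorem is recorded as negative semidefiniteness
of `B` on the orthogonal complement of the ample class `H_t` (`hodge`), and
integrality of the divisor class `D` gives `(D,F)² ≥ 1` (`hDFint`).
Conclusion: if `(D,F) ≠ 0` and `(D, H_t) = 0` for some `t > 0`, then
`D² ≤ −(H² + 2t(H,F))/(H,F)²`. -/
theorem yoshioka_wall_bound
    {N : Type*} [AddCommGroup N] [Module ℚ N]
    (B : N →ₗ[ℚ] N →ₗ[ℚ] ℚ) (hB : ∀ x y : N, B x y = B y x)
    (H F D : N) (t : ℚ) (ht : 0 < t)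
    (hF2 : B F F = 0) (hHF : 0 < B H F) (hH2 : 0 < B H H)
    (hodge : ∀ x : N, B x (H + t • F) = 0 → B x x ≤ 0)
    (hDF : B D F ≠ 0)
    (hDFint : 1 ≤ (B D F) ^ 2)
    (hDHt : B D (H + t • F) = 0) :
    B D D ≤ -(B H H + 2 * t * (B H F)) / (B H F) ^ 2 := by
  have hFH : B F H = B H F := hB F H
  have hFD : B F D = B D F := hB F D
  have hDH : B D H = -(t * B D F) := by
    have h := hDHt
    simp only [map_add, map_smul, smul_eq_mul] at h
    linarith
  have hHD : B H D = -(t * B D F) := by rw [hB]; exact hDH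
  set c : ℚ := B H F with hc
  set q : ℚ := B H H + 2 * t * c with hq
  set x : N := (c ^ 2) • D + (B D F) • (q • F - c • (H + t • F)) with hx
  have hxHt : B x (H + t • F) = 0 := by
    simp only [hx, map_add, map_smul, map_sub, LinearMap.add_apply, LinearMap.smul_apply,
      LinearMap.sub_apply, smul_eq_mul, hF2, hFH, hFD, hDH, hHD, hq]
    ring
  have hxx := hodge x hxHt
  have hexp : B x x = c ^ 4 * B D D + c ^ 2 * q * (B D F) ^ 2 := by
    simp only [hx, map_add, map_smul, map_sub, LinearMap.add_apply, LinearMap.smul_apply,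
      LinearMap.sub_apply, smul_eq_mul, hF2, hFH, hFD, hDH, hHD, hq]
    ring
  rw [hexp] at hxx
  have hc2 : 0 < c ^ 2 := by positivity
  have hq0 : 0 < q := by
    have := mul_pos ht hHF
    simp only [hq]; nlinarith
  rw [le_div_iff₀ hc2]
  nlinarith [mul_nonneg hq0.le (sub_nonneg.mpr hDFint)]
end

section
/- Let X be a smooth projective surface, f : X → C a fibration over a smooth curve with connected fibers, H ample, F the fiber class, and H_t = H + tF. Fix r > 0, c₁ ∈ H²(X,ℤ), Δ ∈ ℤ with gcd(r, (c₁,F)) = 1. Suppose a sheaf E of rank r, first Chern class c₁ and discriminant Δ(E) ≤ Δ is H_{t}-stable for t = t₀ but strictly semistable-destabilized for nearby t, via an exact sequence 0 → E₁ → E → E₂ → 0 with μ_{t₀}(E₁) = μ_{t₀}(E₂) and E₁, E₂ H_{t₀}-semistable. Then Δ(E) ≥ (H² + 2t₀(H,F))/(r³(H,F)²). In particular the set of walls t₀ is bounded above. -/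
set_option maxHeartbeats 1600000
private lemma bilin_expand {N : Type*} [AddCommGroup N] [Module ℚ N]
    (B : N →ₗ[ℚ] N →ₗ[ℚ] ℚ) (hB : ∀ x y : N, B x y = B y x)
    (u v w : N) (α β γ : ℚ) :
    B (α • u + β • v + γ • w) (α • u + β • v + γ • w)
      = α^2 * B u u + β^2 * B v v + γ^2 * B w w
        + 2*α*β * B u v + 2*α*γ * B u w + 2*β*γ * B v w := by
  simp only [map_add, map_smul, LinearMap.add_apply, LinearMap.smul_apply,
    smul_eq_mul, hB v u, hB w u, hB w v]
  ring

private lemma aux_hodge (p q a DD : ℚ) (hp : 0 < p) (hq : 0 < q) (ha : 1 ≤ a ^ 2)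
    (hxx : (p^2)^2 * DD + (a*q)^2 * 0 + (-(a*p))^2 * q
        + 2*(p^2)*(a*q) * a + 2*(p^2)*(-(a*p)) * 0 + 2*(a*q)*(-(a*p)) * p ≤ 0) :
    p^2 * DD + q ≤ 0 := by
  have h5 : p^4 * DD + p^2 * q ≤ 0 := by
    nlinarith [mul_le_mul_of_nonneg_right ha (le_of_lt (mul_pos (pow_pos hp 2) hq))]
  have h6 : p^2 * (p^2 * DD + q) ≤ 0 := by nlinarith [h5]
  by_contra hcon
  push_neg at hcon
  exact absurd h6 (not_le.mpr (mul_pos (pow_pos hp 2) hcon))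

private lemma aux_final (r₁ r₂ p q ΔE DD : ℚ) (hr₁ : 1 ≤ r₁) (hr₂ : 1 ≤ r₂)
    (hp : 0 < p) (hq : 0 < q) (hDD : p^2 * DD + q ≤ 0) (hkey : -DD ≤ r₁ * r₂ * ΔE) :
    q / ((r₁ + r₂) ^ 3 * p ^ 2) ≤ ΔE := by
  have h1 : q ≤ p^2 * (r₁ * r₂ * ΔE) := by
    nlinarith [mul_le_mul_of_nonneg_left hkey (sq_nonneg p)]
  have hΔ : 0 < ΔE := by
    by_contra hc
    push_neg at hc
    have h2 : p^2 * (r₁ * r₂ * ΔE) ≤ 0 :=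
      mul_nonpos_of_nonneg_of_nonpos (sq_nonneg p)
        (mul_nonpos_of_nonneg_of_nonpos (by nlinarith) hc)
    linarith
  have hrr : r₁ * r₂ ≤ (r₁ + r₂) ^ 3 := by
    nlinarith [mul_nonneg (sq_nonneg (r₁ + r₂)) (by linarith : (0:ℚ) ≤ r₁ + r₂ - 1),
      sq_nonneg (r₁ - r₂), mul_pos (by linarith : (0:ℚ) < r₁) (by linarith : (0:ℚ) < r₂)]
  rw [div_le_iff₀ (by positivity)]
  nlinarith [mul_nonneg (by linarith : (0:ℚ) ≤ (r₁ + r₂)^3 - r₁ * r₂)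
    (mul_nonneg (sq_nonneg p) hΔ.le), h1]


/-- bound on walls, Theorem 2.12(1): on a fibered smooth
projective surface with ample `H`, fiber class `F` and `H_t = H + tF`, suppose
a sheaf `E` of rank `r = r₁ + r₂`, first Chern class `c₁E = c₁E₁ + c₁E₂` and
discriminant `Δ(E) ≤ Δbound` with `gcd(r, (c₁E,F)) = 1` is `H_{t₀}`-stable but
destabilized at the wall `t₀` via `0 → E₁ → E → E₂ → 0` with
`μ_{t₀}(E₁) = μ_{t₀}(E₂)` and `E₁`, `E₂` `H_{t₀}`-semistable (so the Bogomolov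
inequality `Δ(Eᵢ) ≥ 0` holds).  Then
`Δ(E) ≥ (H² + 2t₀(H,F))/(r³(H,F)²)`; in particular the walls `t₀` are bounded
above. `N` models the rational Néron–Severi group with intersection pairing
`B`; the Hodge index theorem appears as `hodge`. -/
theorem wall_discriminant_bound
    {N : Type*} [AddCommGroup N] [Module ℚ N]
    (B : N →ₗ[ℚ] N →ₗ[ℚ] ℚ) (hB : ∀ x y : N, B x y = B y x)
    (H F : N) (t₀ : ℚ) (ht₀ : 0 < t₀)
    (hF2 : B F F = 0) (hHF : 0 < B H F) (hH2 : 0 < B H H)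
    (hodge : ∀ x : N, B x (H + t₀ • F) = 0 → B x x ≤ 0)
    (r₁ r₂ : ℤ) (hr₁ : 0 < r₁) (hr₂ : 0 < r₂)
    (c₁E₁ c₁E₂ : N) (ch₂E₁ ch₂E₂ : ℚ)
    (d₁ d₂ : ℤ) (hd₁ : B c₁E₁ F = (d₁ : ℚ)) (hd₂ : B c₁E₂ F = (d₂ : ℚ))
    (hcop : Int.gcd (r₁ + r₂) (d₁ + d₂) = 1)
    (Δbound : ℤ)
    (hΔ : B (c₁E₁ + c₁E₂) (c₁E₁ + c₁E₂)
            - 2 * ((r₁ : ℚ) + (r₂ : ℚ)) * (ch₂E₁ + ch₂E₂) ≤ (Δbound : ℚ))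
    (hwall : (B c₁E₁ H + t₀ * (d₁ : ℚ)) / (r₁ : ℚ)
              = (B c₁E₂ H + t₀ * (d₂ : ℚ)) / (r₂ : ℚ))
    (hBog₁ : 0 ≤ B c₁E₁ c₁E₁ - 2 * (r₁ : ℚ) * ch₂E₁)
    (hBog₂ : 0 ≤ B c₁E₂ c₁E₂ - 2 * (r₂ : ℚ) * ch₂E₂) :
    (B H H + 2 * t₀ * (B H F)) / (((r₁ : ℚ) + (r₂ : ℚ)) ^ 3 * (B H F) ^ 2)
      ≤ B (c₁E₁ + c₁E₂) (c₁E₁ + c₁E₂)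
          - 2 * ((r₁ : ℚ) + (r₂ : ℚ)) * (ch₂E₁ + ch₂E₂) := by
  obtain ⟨Ht, hHt⟩ : ∃ Ht, Ht = H + t₀ • F := ⟨_, rfl⟩
  obtain ⟨D, hD⟩ : ∃ D, D = (r₂ : ℚ) • c₁E₁ - (r₁ : ℚ) • c₁E₂ := ⟨_, rfl⟩
  obtain ⟨p, hp⟩ : ∃ p : ℚ, p = B H F := ⟨_, rfl⟩
  obtain ⟨q, hq⟩ : ∃ q : ℚ, q = B H H + 2 * t₀ * p := ⟨_, rfl⟩
  obtain ⟨a, ha⟩ : ∃ a : ℚ, a = (r₂ : ℚ) * d₁ - (r₁ : ℚ) * d₂ := ⟨_, rfl⟩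
  have hp0 : 0 < p := hp ▸ hHF
  have hq0 : 0 < q := by rw [hq]; positivity
  have hr₁Q : (0:ℚ) < (r₁:ℚ) := by exact_mod_cast hr₁
  have hr₂Q : (0:ℚ) < (r₂:ℚ) := by exact_mod_cast hr₂
  have hFH : B F H = p := by rw [hB, hp]
  have hwall' : (r₂:ℚ) * (B c₁E₁ H + t₀ * d₁) = (r₁:ℚ) * (B c₁E₂ H + t₀ * d₂) := by
    field_simp at hwall
    linarith [hwall]
  have hDF : B D F = a := by
    rw [hD, ha]
    simp only [map_sub, map_smul, LinearMap.sub_apply, LinearMap.smul_apply,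
      smul_eq_mul, hd₁, hd₂]
  have hDHt : B D Ht = 0 := by
    rw [hD, hHt]
    simp only [map_sub, map_smul, map_add, LinearMap.sub_apply,
      LinearMap.smul_apply, smul_eq_mul, hd₁, hd₂]
    linarith [hwall']
  have hFHt : B F Ht = p := by
    rw [hHt]
    simp only [map_add, map_smul, LinearMap.add_apply, LinearMap.smul_apply,
      smul_eq_mul, hFH, hF2]
    ring
  have hHtHt : B Ht Ht = q := by
    rw [hHt]
    simp only [map_add, map_smul, LinearMap.add_apply, LinearMap.smul_apply,
      smul_eq_mul, hFH, hF2, hp]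
    rw [hq, hp]; ring
  -- a ≠ 0 from coprimality
  have hm0 : r₂ * d₁ - r₁ * d₂ ≠ 0 := by
    intro h
    have h1 : (r₁ + r₂) * d₁ = r₁ * (d₁ + d₂) := by linarith [sub_eq_zero.mp h]
    have hdvd : (r₁ + r₂) ∣ r₁ * (d₁ + d₂) := ⟨d₁, h1.symm⟩
    have hco : IsCoprime (r₁ + r₂) (d₁ + d₂) := Int.isCoprime_iff_gcd_eq_one.mpr hcop
    have hdvd2 : (r₁ + r₂) ∣ r₁ := hco.dvd_of_dvd_mul_right hdvd
    have := Int.le_of_dvd hr₁ hdvd2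
    omega
  have ha2 : (1:ℚ) ≤ a ^ 2 := by
    have haM : a = ((r₂ * d₁ - r₁ * d₂ : ℤ) : ℚ) := by rw [ha]; push_cast; ring
    rw [haM]
    have h1 : (1:ℤ) ≤ (r₂ * d₁ - r₁ * d₂) ^ 2 := by
      nlinarith [Int.one_le_abs hm0, sq_abs (r₂ * d₁ - r₁ * d₂), abs_nonneg (r₂ * d₁ - r₁ * d₂)]
    exact_mod_cast h1
  -- Hodge index applied to x = p² D + (a q) F + (-a p) Ht
  have hxHt : B ((p^2) • D + (a*q) • F + (-(a*p)) • Ht) Ht = 0 := by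
    simp only [map_add, map_smul, LinearMap.add_apply, LinearMap.smul_apply,
      smul_eq_mul, hDHt, hFHt, hHtHt]
    ring
  have hxx := hodge _ (hHt ▸ hxHt)
  rw [← hHt] at hxx
  rw [bilin_expand B hB D F Ht (p^2) (a*q) (-(a*p)), hF2, hHtHt, hDF, hDHt, hFHt]
    at hxx
  have hDD : p^2 * B D D + q ≤ 0 := aux_hodge p q a (B D D) hp0 hq0 ha2 hxx
  -- discriminant identity
  have hexp : B D D = (r₂:ℚ)^2 * B c₁E₁ c₁E₁ - 2 * (r₁:ℚ) * (r₂:ℚ) * B c₁E₁ c₁E₂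
      + (r₁:ℚ)^2 * B c₁E₂ c₁E₂ := by
    rw [hD]
    simp only [map_sub, map_smul, LinearMap.sub_apply, LinearMap.smul_apply,
      smul_eq_mul, hB c₁E₂ c₁E₁]
    ring
  have hexp2 : B (c₁E₁ + c₁E₂) (c₁E₁ + c₁E₂)
      = B c₁E₁ c₁E₁ + 2 * B c₁E₁ c₁E₂ + B c₁E₂ c₁E₂ := by
    simp only [map_add, LinearMap.add_apply, hB c₁E₂ c₁E₁]
    ring
  obtain ⟨ΔE, hΔE⟩ : ∃ ΔE : ℚ, ΔE = B (c₁E₁ + c₁E₂) (c₁E₁ + c₁E₂)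
      - 2 * ((r₁:ℚ) + (r₂:ℚ)) * (ch₂E₁ + ch₂E₂) := ⟨_, rfl⟩
  have h1 := mul_nonneg (mul_nonneg hr₂Q.le (by positivity : (0:ℚ) ≤ (r₁:ℚ)+(r₂:ℚ))) hBog₁
  have h2 := mul_nonneg (mul_nonneg hr₁Q.le (by positivity : (0:ℚ) ≤ (r₁:ℚ)+(r₂:ℚ))) hBog₂
  have hid : (r₁:ℚ) * r₂ * ΔE + B D D
      = (r₂:ℚ) * ((r₁:ℚ)+(r₂:ℚ)) * (B c₁E₁ c₁E₁ - 2 * (r₁:ℚ) * ch₂E₁)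
        + (r₁:ℚ) * ((r₁:ℚ)+(r₂:ℚ)) * (B c₁E₂ c₁E₂ - 2 * (r₂:ℚ) * ch₂E₂) := by
    rw [hΔE, hexp, hexp2]; ring
  have hkey : - B D D ≤ (r₁:ℚ) * r₂ * ΔE := by linarith
  rw [← hΔE, ← hp, ← hq]
  have hr₁1 : (1:ℚ) ≤ (r₁:ℚ) := by exact_mod_cast hr₁
  have hr₂1 : (1:ℚ) ≤ (r₂:ℚ) := by exact_mod_cast hr₂
  exact aux_final (r₁:ℚ) (r₂:ℚ) p q ΔE (B D D) hr₁1 hr₂1 hp0 hq0 hDD hkey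
end
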